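/- arXiv:1809.00401 — 4 statements merged into one kernel-verified Lean document; each statement's English description precedes it below -/
import Mathlib

section
/- Let X be a compact connected Hausdorff space, let U ⊆ X be a nonempty open set with U ≠ X, and let C be a connected component of U. Then the closure of C in X intersects X \ U. -/
/-!
If `closure C ⊆ U`, thicken `closure C` to an open `V` with `closure V ⊆ U`. The component of
`x` in the compact set `closure V` lies in `C ⊆ V`, and in a compact Hausdorff space a component
is the intersection of the clopen sets containing it (Šura-Bura), so some relatively clopen
subset of `closure V` containing `x` lies in `V`. Being inside the open set `V`, it is clopen in
`X`, hence all of `X` by connectedness, forcing `U = X`.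
-/

open Set

theorem exists_isClopen_of_connectedComponent_subset {X : Type*} [TopologicalSpace X]
    [CompactSpace X] [T2Space X] {x : X} {W : Set X} (hW : IsOpen W)
    (h : connectedComponent x ⊆ W) : ∃ Z, IsClopen Z ∧ x ∈ Z ∧ Z ⊆ W := by
  have : Nonempty { s : Set X // IsClopen s ∧ x ∈ s } := ⟨⟨univ, isClopen_univ, mem_univ x⟩⟩
  have hdir : Directed (· ⊇ ·) fun s : { s : Set X // IsClopen s ∧ x ∈ s } => (s : Set X) :=
    fun s t => ⟨⟨s ∩ t, s.2.1.inter t.2.1, s.2.2, t.2.2⟩, inter_subset_left, inter_subset_right⟩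
  rw [connectedComponent_eq_iInter_isClopen] at h
  obtain ⟨⟨Z, hZ, hxZ⟩, hZW⟩ := exists_subset_nhds_of_compactSpace hdir
    (fun s => s.2.1.isClosed) fun y hy => hW.mem_nhds (h hy)
  exact ⟨Z, hZ, hxZ, hZW⟩

theorem IsCompact.exists_isClopen_of_connectedComponentIn_subset {X : Type*}
    [TopologicalSpace X] [T2Space X] {K W : Set X} {x : X} (hK : IsCompact K) (hW : IsOpen W)
    (hWK : W ⊆ K) (hx : x ∈ K) (h : connectedComponentIn K x ⊆ W) :
    ∃ Z, IsClopen Z ∧ x ∈ Z ∧ Z ⊆ W := by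
  have := isCompact_iff_compactSpace.mp hK
  have hcomp : connectedComponent (⟨x, hx⟩ : K) ⊆ Subtype.val ⁻¹' W := fun z hz =>
    h (connectedComponentIn_eq_image hx ▸ mem_image_of_mem _ hz)
  obtain ⟨Z, hZ, hxZ, hZW⟩ :=
    exists_isClopen_of_connectedComponent_subset (hW.preimage continuous_subtype_val) hcomp
  obtain ⟨O, hO, rfl⟩ := isOpen_induced_iff.mp hZ.isOpen
  have hZeq : Subtype.val '' (Subtype.val ⁻¹' O : Set K) = O ∩ W := by
    rw [Subtype.image_preimage_coe]
    exact Subset.antisymm (fun y hy => ⟨hy.2, @hZW ⟨y, hy.1⟩ hy.2⟩) fun y hy => ⟨hWK hy.2, hy.1⟩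
  refine ⟨_, ⟨(hZ.isClosed.isCompact.image continuous_subtype_val).isClosed, ?_⟩,
    mem_image_of_mem _ hxZ, image_subset_iff.mpr hZW⟩
  exact hZeq ▸ hO.inter hW

theorem boundary_bumping_general {X : Type*} [TopologicalSpace X] [CompactSpace X]
    [ConnectedSpace X] [T2Space X]
    (U : Set X) (hUopen : IsOpen U) (hUne_univ : U ≠ Set.univ)
    (C : Set X) (x : X) (hx : x ∈ U) (hC : C = connectedComponentIn U x) :
    (closure C ∩ (Set.univ \ U)).Nonempty := by
  by_contra h
  have hCU : closure C ⊆ U := fun y hy => by_contra fun hyU => h ⟨y, hy, mem_univ y, hyU⟩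
  obtain ⟨V, hVo, hCV, hVU⟩ := normal_exists_closure_subset isClosed_closure hUopen hCU
  have hxV : x ∈ V := hCV (subset_closure (hC ▸ mem_connectedComponentIn hx))
  have hcomp : connectedComponentIn (closure V) x ⊆ V :=
    (connectedComponentIn_mono x hVU).trans (hC ▸ subset_closure.trans hCV)
  obtain ⟨Z, hZ, hxZ, hZV⟩ :=
    isClosed_closure.isCompact.exists_isClopen_of_connectedComponentIn_subset hVo
      subset_closure (subset_closure hxV) hcomp
  have hZuniv : Z = univ := (isClopen_iff.mp hZ).resolve_left (nonempty_of_mem hxZ).ne_empty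
  exact hUne_univ (eq_univ_of_univ_subset (hZuniv ▸ hZV.trans (subset_closure.trans hVU)))

/-- **Boundary Bumping Lemma.** Let `X` be a compact connected Hausdorff space,
`U ⊆ X` a nonempty open set with `U ≠ X`, and `C` a connected component of `U`
(i.e. the connected component in `U` of some point `x ∈ U`). Then the closure
of `C` in `X` intersects `X \ U`. -/
theorem boundary_bumping {X : Type*} [TopologicalSpace X] [CompactSpace X]
    [ConnectedSpace X] [T2Space X]
    (U : Set X) (hUopen : IsOpen U) (hUne : U.Nonempty) (hUne_univ : U ≠ Set.univ)
    (C : Set X) (x : X) (hx : x ∈ U) (hC : C = connectedComponentIn U x) :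
    (closure C ∩ (Set.univ \ U)).Nonempty :=
  boundary_bumping_general U hUopen hUne_univ C x hx hC
end

section
/- Every Darboux injection f : [0,1) → ℝ from the half-open unit interval is a topological embedding, i.e., a homeomorphism of [0,1) onto its image with the subspace topology. -/
/-!
An injective Darboux map `f` on an interval is strictly monotone: were `f c` outside
`[[f a, f b]]` for some `c ∈ [[a, b]]`, one of `f a`, `f b` would lie between `f c` and the
other, so by the intermediate value property (connected images of intervals) it would be
attained a second time, contradicting injectivity. The range of `f` is connected, hence
order-connected, and a strictly monotone map of linear orders with order-connected range is
an embedding for the order topologies.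
-/

open Set Topology Interval

def IsDarboux {X Y : Type*} [TopologicalSpace X] [TopologicalSpace Y] (f : X → Y) : Prop :=
  ∀ C : Set X, IsPreconnected C → IsPreconnected (f '' C)

theorem StrictAnti.isEmbedding_of_ordConnected {α β : Type*} [LinearOrder α] [LinearOrder β]
    [TopologicalSpace α] [OrderTopology α] [TopologicalSpace β] [OrderTopology β] {f : α → β}
    (hf : StrictAnti f) (hc : OrdConnected (range f)) : IsEmbedding f :=
  StrictMono.isEmbedding_of_ordConnected (β := βᵒᵈ) hf hc.dual

theorem Set.mem_uIcc_or_mem_uIcc_of_notMem_uIcc {α : Type*} [LinearOrder α] {x y z : α}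
    (hz : z ∉ [[x, y]]) : x ∈ [[z, y]] ∨ y ∈ [[x, z]] := by
  simp only [mem_uIcc] at hz ⊢
  grind

namespace IsDarboux

variable {X Y : Type*} [ConditionallyCompleteLinearOrder X] [DenselyOrdered X]
  [TopologicalSpace X] [OrderTopology X] [LinearOrder Y] [TopologicalSpace Y] [OrderTopology Y]
  {f : X → Y}

theorem uIcc_subset_image_uIcc (hf : IsDarboux f) (a b : X) :
    [[f a, f b]] ⊆ f '' [[a, b]] :=
  (hf _ isPreconnected_uIcc).ordConnected.uIcc_subset (mem_image_of_mem f left_mem_uIcc)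
    (mem_image_of_mem f right_mem_uIcc)

theorem ordConnected_range (hf : IsDarboux f) : OrdConnected (range f) := by
  simpa only [image_univ] using (hf univ isPreconnected_univ).ordConnected

theorem mem_uIcc_of_apply_mem_uIcc (hf : IsDarboux f) (hinj : Function.Injective f) {a b c : X}
    (h : f a ∈ [[f b, f c]]) : a ∈ [[b, c]] := by
  obtain ⟨a', ha', hfa'⟩ := hf.uIcc_subset_image_uIcc b c h
  rwa [← hinj hfa']

theorem monotone_or_antitone (hf : IsDarboux f) (hinj : Function.Injective f) :
    Monotone f ∨ Antitone f := by
  refine monotone_or_antitone_iff_uIcc.2 fun a b c hc ↦ ?_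
  by_contra hfc
  rcases mem_uIcc_or_mem_uIcc_of_notMem_uIcc hfc with ha | hb
  · have hac : c = a := eq_of_mem_uIcc_of_mem_uIcc hc (hf.mem_uIcc_of_apply_mem_uIcc hinj ha)
    exact hfc (hac ▸ left_mem_uIcc)
  · have hbc : b = c := eq_of_mem_uIcc_of_mem_uIcc' (hf.mem_uIcc_of_apply_mem_uIcc hinj hb) hc
    exact hfc (hbc ▸ right_mem_uIcc)

theorem isEmbedding (hf : IsDarboux f) (hinj : Function.Injective f) : IsEmbedding f := by
  rcases hf.monotone_or_antitone hinj with hmono | hanti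
  · exact (hmono.strictMono_of_injective hinj).isEmbedding_of_ordConnected hf.ordConnected_range
  · exact (hanti.strictAnti_of_injective hinj).isEmbedding_of_ordConnected hf.ordConnected_range

end IsDarboux

/-- Every Darboux injection `f : [0,1) → ℝ` (an injective map sending connected sets
to connected sets) is a topological embedding. -/
theorem darboux_injection_Ico_isEmbedding (f : (Set.Ico (0:ℝ) 1) → ℝ)
    (hinj : Function.Injective f)
    (hdarboux : ∀ C : Set (Set.Ico (0:ℝ) 1), IsPreconnected C → IsPreconnected (f '' C)) :
    Topology.IsEmbedding f := by
  -- makes `[0,1)` a conditionally complete linear order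
  have : Inhabited (Set.Ico (0:ℝ) 1) := ⟨⟨0, left_mem_Ico.2 one_pos⟩⟩
  exact IsDarboux.isEmbedding hdarboux hinj
end

section
/- Let f : X → Y be a Darboux map from a regular topological space X to a topological space Y, and let S ⊆ Y be a set that separates the image f(X), i.e., f(X) \ S is disconnected. Then the preimage f⁻¹(S) contains a closed, nowhere dense subset L of X such that X \ L is disconnected. -/
/-!
Put `F = f ⁻¹' S`. Since `f '' Fᶜ = f(X) \ S` is disconnected and `f` is Darboux, `Fᶜ` is
disconnected, say by open sets `u`, `v`. If `F` has empty interior, the open set `u ∩ v` lies in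
`F` and is therefore empty, so `L = (u ∪ v)ᶜ` works. Otherwise, by regularity some closed
neighbourhood `N` of a point lies in `F`, and its frontier works: it lies in `N ⊆ F`, it is
nowhere dense as the frontier of a closed set, and its complement is the union of the disjoint
nonempty open sets `interior N` and `Nᶜ`, the latter containing a point of `Fᶜ`.
-/

open Set

section

variable {X : Type*} [TopologicalSpace X]

theorem not_isPreconnected_union_of_isOpen {u v : Set X} (hu : IsOpen u) (hv : IsOpen v)
    (huv : Disjoint u v) (hu_ne : u.Nonempty) (hv_ne : v.Nonempty) :
    ¬ IsPreconnected (u ∪ v) := by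
  intro h
  have hvu : u ∪ v ⊆ u :=
    h.subset_left_of_subset_union hu hv huv subset_rfl (by rwa [union_inter_cancel_left])
  obtain ⟨y, hy⟩ := hv_ne
  exact huv.notMem_of_mem_right hy (hvu (mem_union_right u hy))

theorem IsClosed.not_isPreconnected_compl_frontier {N : Set X} (hN : IsClosed N)
    (hint : (interior N).Nonempty) (hcompl : Nᶜ.Nonempty) :
    ¬ IsPreconnected (frontier N)ᶜ := by
  rw [compl_frontier_eq_union_interior, hN.isOpen_compl.interior_eq]
  exact not_isPreconnected_union_of_isOpen isOpen_interior hN.isOpen_compl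
    (disjoint_compl_right.mono_left interior_subset) hint hcompl

theorem exists_isClosed_isNowhereDense_subset_of_interior_eq_empty {F : Set X}
    (hF : interior F = ∅) (hFc : ¬ IsPreconnected Fᶜ) :
    ∃ L ⊆ F, IsClosed L ∧ IsNowhereDense L ∧ ¬ IsPreconnected Lᶜ := by
  simp only [IsPreconnected, not_forall, exists_prop] at hFc
  obtain ⟨u, v, hu, hv, hcover, ⟨a, haF, hau⟩, ⟨b, hbF, hbv⟩, hsep⟩ := hFc
  have hLF : (u ∪ v)ᶜ ⊆ F := compl_subset_comm.mp hcover
  have hdisj : Disjoint u v := by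
    have huvF : u ∩ v ⊆ F := fun z hz => by_contra fun hzF => hsep ⟨z, hzF, hz⟩
    simpa [disjoint_iff_inter_eq_empty, (hu.inter hv).interior_eq, hF] using interior_mono huvF
  have hL : IsClosed (u ∪ v)ᶜ := (hu.union hv).isClosed_compl
  refine ⟨(u ∪ v)ᶜ, hLF, hL, ?_, ?_⟩
  · exact hL.isNowhereDense_iff.mpr (subset_empty_iff.mp (hF ▸ interior_mono hLF))
  · rw [compl_compl]
    exact not_isPreconnected_union_of_isOpen hu hv hdisj ⟨a, hau⟩ ⟨b, hbv⟩

theorem exists_isClosed_isNowhereDense_subset_of_interior_nonempty [RegularSpace X]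
    {F : Set X} (hF : (interior F).Nonempty) (hFc : Fᶜ.Nonempty) :
    ∃ L ⊆ F, IsClosed L ∧ IsNowhereDense L ∧ ¬ IsPreconnected Lᶜ := by
  obtain ⟨x, hx⟩ := hF
  obtain ⟨N, hNx, hN, hNF⟩ := exists_mem_nhds_isClosed_subset (isOpen_interior.mem_nhds hx)
  obtain ⟨y, hy⟩ := hFc
  refine ⟨frontier N, ?_, isClosed_frontier, ?_, ?_⟩
  · exact (hN.frontier_subset).trans (hNF.trans interior_subset)
  · exact isClosed_frontier.isNowhereDense_iff.mpr (interior_frontier hN)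
  · exact hN.not_isPreconnected_compl_frontier ⟨x, mem_interior_iff_mem_nhds.mpr hNx⟩
      ⟨y, fun hyN => hy (interior_subset (hNF hyN))⟩

theorem exists_isClosed_isNowhereDense_subset_of_not_isPreconnected_compl [RegularSpace X]
    {F : Set X} (hFc : ¬ IsPreconnected Fᶜ) :
    ∃ L ⊆ F, IsClosed L ∧ IsNowhereDense L ∧ ¬ IsPreconnected Lᶜ := by
  rcases (interior F).eq_empty_or_nonempty with hF | hF
  · exact exists_isClosed_isNowhereDense_subset_of_interior_eq_empty hF hFc
  · have hFc_ne : Fᶜ.Nonempty :=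
      nonempty_iff_ne_empty.mpr fun h => hFc (h ▸ isPreconnected_empty)
    exact exists_isClosed_isNowhereDense_subset_of_interior_nonempty hF hFc_ne

end

/-- Let `f : X → Y` be a Darboux map from a regular topological space `X` to a
topological space `Y`, and let `S ⊆ Y` separate the image `f(X)`, i.e. `f(X) \ S`
is disconnected. Then `f ⁻¹' S` contains a closed nowhere dense subset `L` of `X`
such that `X \ L` is disconnected. -/
theorem darboux_preimage_of_separator {X Y : Type*} [TopologicalSpace X] [RegularSpace X]
    [TopologicalSpace Y] (f : X → Y)
    (hdarboux : ∀ C : Set X, IsPreconnected C → IsPreconnected (f '' C))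
    (S : Set Y) (hsep : ¬ IsPreconnected (Set.range f \ S)) :
    ∃ L : Set X, L ⊆ f ⁻¹' S ∧ IsClosed L ∧ IsNowhereDense L ∧
      ¬ IsPreconnected (Lᶜ) := by
  have hcompl : ¬ IsPreconnected (f ⁻¹' S)ᶜ :=
    fun h => hsep (image_compl_preimage ▸ hdarboux _ h)
  exact exists_isClosed_isNowhereDense_subset_of_not_isPreconnected_compl hcompl
end

section
/- Let X be a Peano continuum, let a, b ∈ X be two distinct points, and let C ⊆ X be a closed set such that a and b lie in different connected components of X \ C. Then there exists a closed set M ⊆ C such that a and b lie in different connected components of X \ M and M is an irreducible separator between a and b: every closed subset F ⊆ M such that a and b lie in different connected components of X \ F is equal to M. -/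
/-!
By Zorn's lemma it suffices that the intersection `M` of a chain of closed sets separating `a`
from `b` separates them too. In a locally connected space the component of `a` in `Mᶜ` is the
union of its components in the complements of the members of the chain: this union is open, and
it is closed in `Mᶜ` because each point of `Mᶜ` has a connected neighbourhood avoiding some member
of the chain. So if `b` were in the component of `a` in `Mᶜ`, it would already be in the
component of `a` in the complement of some member of the chain.
-/

open Set

section LocallyConnected

variable {X : Type*} [TopologicalSpace X] [LocallyConnectedSpace X] {c : Set (Set X)}

theorem closure_biUnion_connectedComponentIn_compl_inter_subset
    (hdir : DirectedOn (· ⊇ ·) c) (hcl : ∀ F ∈ c, IsClosed F) (x : X) :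
    closure (⋃ F ∈ c, connectedComponentIn Fᶜ x) ∩ (⋂₀ c)ᶜ ⊆
      ⋃ F ∈ c, connectedComponentIn Fᶜ x := by
  rintro y ⟨hy_cl, hy⟩
  obtain ⟨F₀, hF₀, hyF₀⟩ : ∃ F₀ ∈ c, y ∉ F₀ := by simpa using hy
  obtain ⟨z, hzy, hzx⟩ := mem_closure_iff.1 hy_cl _
    (hcl F₀ hF₀).isOpen_compl.connectedComponentIn (mem_connectedComponentIn hyF₀)
  obtain ⟨F₁, hF₁, hzx⟩ := mem_iUnion₂.1 hzx
  obtain ⟨F, hF, hF₀F, hF₁F⟩ := hdir F₀ hF₀ F₁ hF₁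
  have hyz : y ∈ connectedComponentIn Fᶜ z := by
    refine connectedComponentIn_mono z (compl_subset_compl.2 hF₀F) ?_
    rw [← connectedComponentIn_eq hzy]
    exact mem_connectedComponentIn hyF₀
  rw [← connectedComponentIn_eq (connectedComponentIn_mono x (compl_subset_compl.2 hF₁F) hzx)]
    at hyz
  exact mem_biUnion hF hyz

theorem connectedComponentIn_compl_sInter (hdir : DirectedOn (· ⊇ ·) c)
    (hcl : ∀ F ∈ c, IsClosed F) (x : X) :
    connectedComponentIn (⋂₀ c)ᶜ x = ⋃ F ∈ c, connectedComponentIn Fᶜ x := by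
  refine Subset.antisymm ?_ (iUnion₂_subset fun F hF =>
    connectedComponentIn_mono x (compl_subset_compl.2 (sInter_subset_of_mem hF)))
  rcases (connectedComponentIn (⋂₀ c)ᶜ x).eq_empty_or_nonempty with h | h
  · simp [h]
  have hx := connectedComponentIn_nonempty_iff.1 h
  obtain ⟨F₀, hF₀, hxF₀⟩ : ∃ F₀ ∈ c, x ∉ F₀ := by simpa using hx
  refine isPreconnected_connectedComponentIn.subset_of_closure_inter_subset
    (isOpen_biUnion fun F hF => (hcl F hF).isOpen_compl.connectedComponentIn)
    ⟨x, mem_connectedComponentIn hx, mem_biUnion hF₀ (mem_connectedComponentIn hxF₀)⟩ ?_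
  exact (inter_subset_inter_right _ (connectedComponentIn_subset _ _)).trans
    (closure_biUnion_connectedComponentIn_compl_inter_subset hdir hcl x)

theorem connectedComponentIn_compl_sInter_ne (hdir : DirectedOn (· ⊇ ·) c)
    (hcl : ∀ F ∈ c, IsClosed F) {a b : X} (hb : b ∉ ⋂₀ c)
    (hsep : ∀ F ∈ c, connectedComponentIn Fᶜ a ≠ connectedComponentIn Fᶜ b) :
    connectedComponentIn (⋂₀ c)ᶜ a ≠ connectedComponentIn (⋂₀ c)ᶜ b := by
  intro h
  have hb_mem : b ∈ ⋃ F ∈ c, connectedComponentIn Fᶜ a := by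
    rw [← connectedComponentIn_compl_sInter hdir hcl, h]
    exact mem_connectedComponentIn hb
  obtain ⟨F, hF, hbF⟩ := mem_iUnion₂.1 hb_mem
  exact hsep F hF (connectedComponentIn_eq hbF)

end LocallyConnected

theorem exists_irreducible_separator_general {X : Type*} [TopologicalSpace X]
    [LocallyConnectedSpace X]
    (a b : X) (C : Set X) (hC : IsClosed C)
    (hb : b ∉ C)
    (hsep : connectedComponentIn Cᶜ a ≠ connectedComponentIn Cᶜ b) :
    ∃ M ⊆ C, IsClosed M ∧
      connectedComponentIn Mᶜ a ≠ connectedComponentIn Mᶜ b ∧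
      ∀ F ⊆ M, IsClosed F →
        connectedComponentIn Fᶜ a ≠ connectedComponentIn Fᶜ b → F = M := by
  set S : Set (Set X) :=
    {F | F ⊆ C ∧ IsClosed F ∧ connectedComponentIn Fᶜ a ≠ connectedComponentIn Fᶜ b}
  have hS_chain : ∀ c ⊆ S, IsChain (· ⊆ ·) c → c.Nonempty → ∃ lb ∈ S, ∀ F ∈ c, lb ⊆ F := by
    rintro c hcS hchain ⟨F₀, hF₀⟩
    have hcl : ∀ F ∈ c, IsClosed F := fun F hF => (hcS hF).2.1
    have hsub : ⋂₀ c ⊆ C := (sInter_subset_of_mem hF₀).trans (hcS hF₀).1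
    have hdir : DirectedOn (· ⊇ ·) c :=
      IsChain.directedOn (r := fun s t : Set X => s ⊇ t) hchain.symm
    have hsep_inter := connectedComponentIn_compl_sInter_ne hdir hcl (fun h => hb (hsub h))
      fun F hF => (hcS hF).2.2
    exact ⟨⋂₀ c, ⟨hsub, isClosed_sInter hcl, hsep_inter⟩, fun F hF => sInter_subset_of_mem hF⟩
  obtain ⟨M, hMC, hM⟩ := zorn_superset_nonempty S hS_chain C ⟨subset_rfl, hC, hsep⟩
  obtain ⟨-, hMcl, hMsep⟩ := hM.prop
  exact ⟨M, hMC, hMcl, hMsep, fun F hFM hFcl hFsep =>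
    hM.eq_of_subset ⟨hFM.trans hMC, hFcl, hFsep⟩ hFM⟩

/-- Let `X` be a Peano continuum (a nonempty connected, locally connected, compact
metrizable space), let `a ≠ b` be points of `X`, and let `C ⊆ X` be a closed set
such that `a` and `b` lie in different connected components of `X \ C`. Then `C`
contains a closed set `M` which is an irreducible separator of `X` between `a` and
`b`: the points `a, b` lie in different connected components of `X \ M`, and every
closed subset `F ⊆ M` separating `a` from `b` in this sense equals `M`. -/
theorem exists_irreducible_separator {X : Type*} [TopologicalSpace X] [CompactSpace X]
    [ConnectedSpace X] [LocallyConnectedSpace X] [TopologicalSpace.MetrizableSpace X]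
    [Nonempty X]
    (a b : X) (hab : a ≠ b) (C : Set X) (hC : IsClosed C)
    (ha : a ∉ C) (hb : b ∉ C)
    (hsep : connectedComponentIn Cᶜ a ≠ connectedComponentIn Cᶜ b) :
    ∃ M ⊆ C, IsClosed M ∧
      connectedComponentIn Mᶜ a ≠ connectedComponentIn Mᶜ b ∧
      ∀ F ⊆ M, IsClosed F →
        connectedComponentIn Fᶜ a ≠ connectedComponentIn Fᶜ b → F = M :=
  exists_irreducible_separator_general a b C hC hb hsep
end
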